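/- Let (A, μ, Δ, α, c, R) be a Hom-bialgebra with weak unit c and R ∈ A ⊗ A satisfying the first two quasi-triangularity axioms (Δ ⊗ α)(R) = R₁₃R₂₃ and (α ⊗ Δ)(R) = R₁₃R₁₂ (no surjectivity of α assumed). Then Rᵅ = (α ⊗ α)(R) also satisfies these two axioms: (Δ ⊗ α)(Rᵅ) = Rᵅ₁₃Rᵅ₂₃ and (α ⊗ Δ)(Rᵅ) = Rᵅ₁₃Rᵅ₁₂. -/

import Mathlib

/-! Apply `(α ⊗ α) ⊗ α` to the axioms for `R`; since `α` commutes with `Δ`, the left-hand sides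
become those for `Rᵅ`. On the right, `α c` need not be a weak unit, so `α` does not carry `R₁₃`
to `Rᵅ₁₃`; but in `R₁₃R₂₃` and `R₁₃R₁₂` the unit `c` only occurs multiplied against a tensor
factor, and `α` commutes with multiplication by `c` on either side (both composites are `α ∘ α`). -/

open TensorProduct

variable {k : Type*} [CommRing k] {A : Type*} [AddCommGroup A] [Module k A]

/-- Componentwise product on `A ⊗ A` induced by a bilinear multiplication `μ`. -/
noncomputable def mulT2 (μ : A →ₗ[k] A →ₗ[k] A) (X Y : A ⊗[k] A) : A ⊗[k] A :=
  ((TensorProduct.map (TensorProduct.lift μ) (TensorProduct.lift μ)) ∘ₗ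
    (TensorProduct.tensorTensorTensorComm k A A A A).toLinearMap) (X ⊗ₜ[k] Y)

/-- Componentwise product on `(A ⊗ A) ⊗ A` induced by `μ`. -/
noncomputable def mulT3 (μ : A →ₗ[k] A →ₗ[k] A) (X Y : (A ⊗[k] A) ⊗[k] A) :
    (A ⊗[k] A) ⊗[k] A :=
  ((TensorProduct.map
      ((TensorProduct.map (TensorProduct.lift μ) (TensorProduct.lift μ)) ∘ₗ
        (TensorProduct.tensorTensorTensorComm k A A A A).toLinearMap)
      (TensorProduct.lift μ)) ∘ₗ
    (TensorProduct.tensorTensorTensorComm k (A ⊗[k] A) A (A ⊗[k] A) A).toLinearMap)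
    (X ⊗ₜ[k] Y)

/-- `R₁₂ = R ⊗ c`. -/
noncomputable def R12e (c : A) (R : A ⊗[k] A) : (A ⊗[k] A) ⊗[k] A := R ⊗ₜ[k] c

/-- `R₂₃ = c ⊗ R`. -/
noncomputable def R23e (c : A) (R : A ⊗[k] A) : (A ⊗[k] A) ⊗[k] A :=
  (TensorProduct.assoc k A A A).symm (c ⊗ₜ[k] R)

/-- `R₁₃ = (τ ⊗ Id)(R₂₃)`. -/
noncomputable def R13e (c : A) (R : A ⊗[k] A) : (A ⊗[k] A) ⊗[k] A :=
  TensorProduct.map (TensorProduct.comm k A A).toLinearMap LinearMap.id (R23e c R)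

section

variable (μ : A →ₗ[k] A →ₗ[k] A) (c : A)

lemma mulT3_add_left (X X' Y : (A ⊗[k] A) ⊗[k] A) :
    mulT3 μ (X + X') Y = mulT3 μ X Y + mulT3 μ X' Y := by
  simp only [mulT3, add_tmul, map_add]

lemma mulT3_add_right (X Y Y' : (A ⊗[k] A) ⊗[k] A) :
    mulT3 μ X (Y + Y') = mulT3 μ X Y + mulT3 μ X Y' := by
  simp only [mulT3, tmul_add, map_add]

lemma R12e_add (X Y : A ⊗[k] A) : R12e c (X + Y) = R12e c X + R12e c Y :=
  add_tmul X Y c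

lemma R23e_add (X Y : A ⊗[k] A) : R23e c (X + Y) = R23e c X + R23e c Y := by
  simp only [R23e, tmul_add, map_add]

lemma R13e_add (X Y : A ⊗[k] A) : R13e c (X + Y) = R13e c X + R13e c Y := by
  simp only [R13e, R23e_add, map_add]

variable {μ c} (f : A →ₗ[k] A) (hf : ∀ x y, f (μ x y) = μ (f x) (f y))
  (hfl : ∀ x, f (μ c x) = μ c (f x)) (hfr : ∀ x, f (μ x c) = μ (f x) c)
include hf hfl hfr

lemma map_mulT3_R13e_R23e (X Y : A ⊗[k] A) :
    map (map f f) f (mulT3 μ (R13e c X) (R23e c Y))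
      = mulT3 μ (R13e c (map f f X)) (R23e c (map f f Y)) := by
  induction X using TensorProduct.induction_on with
  | zero => simp [mulT3, R13e, R23e]
  | add X X' hX hX' => simp only [map_add, R13e_add, mulT3_add_left, hX, hX']
  | tmul a b =>
    induction Y using TensorProduct.induction_on with
    | zero => simp [mulT3, R13e, R23e]
    | add Y Y' hY hY' => simp only [map_add, R23e_add, mulT3_add_right, hY, hY']
    | tmul u v =>
      simp only [mulT3, R13e, R23e, assoc_symm_tmul, map_tmul, LinearMap.comp_apply,
        LinearEquiv.coe_coe, tensorTensorTensorComm_tmul, lift.tmul, LinearMap.id_coe, id_eq,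
        comm_tmul]
      rw [hf b v, hfl, hfr]

lemma map_mulT3_R13e_R12e (X Y : A ⊗[k] A) :
    map (map f f) f (mulT3 μ (R13e c X) (R12e c Y))
      = mulT3 μ (R13e c (map f f X)) (R12e c (map f f Y)) := by
  induction X using TensorProduct.induction_on with
  | zero => simp [mulT3, R13e, R23e]
  | add X X' hX hX' => simp only [map_add, R13e_add, mulT3_add_left, hX, hX']
  | tmul a b =>
    induction Y using TensorProduct.induction_on with
    | zero => simp [mulT3, R12e]
    | add Y Y' hY hY' => simp only [map_add, R12e_add, mulT3_add_right, hY, hY']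
    | tmul u v =>
      simp only [mulT3, R13e, R23e, R12e, assoc_symm_tmul, map_tmul, LinearMap.comp_apply,
        LinearEquiv.coe_coe, tensorTensorTensorComm_tmul, lift.tmul, LinearMap.id_coe, id_eq,
        comm_tmul]
      rw [hf a u, hfl, hfr]

end

theorem twisted_R_first_two_axioms_general
    (μ : A →ₗ[k] A →ₗ[k] A) (Δ : A →ₗ[k] A ⊗[k] A) (α : A →ₗ[k] A) (c : A) (R : A ⊗[k] A)
    (hαμ : ∀ x y : A, α (μ x y) = μ (α x) (α y))
    (hαΔ : Δ ∘ₗ α = TensorProduct.map α α ∘ₗ Δ)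
    (hcl : ∀ x : A, μ c x = α x) (hcr : ∀ x : A, μ x c = α x)
    (hR1 : TensorProduct.map Δ α R = mulT3 μ (R13e c R) (R23e c R))
    (hR2 : (TensorProduct.assoc k A A A).symm (TensorProduct.map α Δ R)
      = mulT3 μ (R13e c R) (R12e c R)) :
    (TensorProduct.map Δ α (TensorProduct.map α α R)
        = mulT3 μ (R13e c (TensorProduct.map α α R)) (R23e c (TensorProduct.map α α R))) ∧
    ((TensorProduct.assoc k A A A).symm (TensorProduct.map α Δ (TensorProduct.map α α R))
        = mulT3 μ (R13e c (TensorProduct.map α α R)) (R12e c (TensorProduct.map α α R))) := by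
  have hαl : ∀ x, α (μ c x) = μ c (α x) := fun x => by rw [hcl, hcl]
  have hαr : ∀ x, α (μ x c) = μ (α x) c := fun x => by rw [hcr, hcr]
  constructor
  · rw [map_map, hαΔ, ← map_map (map α α) α Δ α, hR1, map_mulT3_R13e_R23e α hαμ hαl hαr]
  · rw [map_map, hαΔ, ← map_map α (map α α) α Δ, ← map_map_assoc_symm, hR2,
      map_mulT3_R13e_R12e α hαμ hαl hαr]

/-- If `R` satisfies the first two quasi-triangularity axioms (no
surjectivity of `α` assumed), then so does `Rᵅ = (α ⊗ α)(R)`. -/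
theorem twisted_R_first_two_axioms
    (μ : A →ₗ[k] A →ₗ[k] A) (Δ : A →ₗ[k] A ⊗[k] A) (α : A →ₗ[k] A) (c : A) (R : A ⊗[k] A)
    (hαμ : ∀ x y : A, α (μ x y) = μ (α x) (α y))
    (hassoc : ∀ x y z : A, μ (μ x y) (α z) = μ (α x) (μ y z))
    (hαΔ : Δ ∘ₗ α = TensorProduct.map α α ∘ₗ Δ)
    (hcoassoc : (TensorProduct.assoc k A A A).toLinearMap ∘ₗ TensorProduct.map Δ α ∘ₗ Δ
      = TensorProduct.map α Δ ∘ₗ Δ)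
    (hcompat : ∀ x y : A, Δ (μ x y) = mulT2 μ (Δ x) (Δ y))
    (hcl : ∀ x : A, μ c x = α x) (hcr : ∀ x : A, μ x c = α x)
    (hR1 : TensorProduct.map Δ α R = mulT3 μ (R13e c R) (R23e c R))
    (hR2 : (TensorProduct.assoc k A A A).symm (TensorProduct.map α Δ R)
      = mulT3 μ (R13e c R) (R12e c R)) :
    (TensorProduct.map Δ α (TensorProduct.map α α R)
        = mulT3 μ (R13e c (TensorProduct.map α α R)) (R23e c (TensorProduct.map α α R))) ∧
    ((TensorProduct.assoc k A A A).symm (TensorProduct.map α Δ (TensorProduct.map α α R))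
        = mulT3 μ (R13e c (TensorProduct.map α α R)) (R12e c (TensorProduct.map α α R))) :=
  twisted_R_first_two_axioms_general μ Δ α c R hαμ hαΔ hcl hcr hR1 hR2
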